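/- With K an omega-Dini Calderon-Zygmund convolution kernel as above, for every k in Z and every xi with |2^k xi| > 1, the Fourier transform of K^k = K chi_{|.| > 2^k} satisfies |hat{K^k}(xi)| <= c_n ( C_K |2^k xi|^{-1} + ||omega^{1/2}||_Dini * omega(|2^k xi|^{-1})^{1/2} ). -/

import Mathlib

/-!
Put `z = ξ / (2‖ξ‖²)`, so that `⟪z, ξ⟫ = 1/2` and the Fourier character changes sign under
`x ↦ x + z`. Hence the Fourier integral of `φ = K · 1_{‖x‖ > 2^k}` is half that of `φ - φ(· + z)`.
This difference is at most `2 C_K 2^{-kn}` on the annulus of width `2‖z‖` around the sphere of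
radius `2^k`, which contributes `O(C_K ‖z‖ / 2^k)`, and at most `ω(‖z‖/‖x‖)/‖x‖ⁿ` outside it,
which integrates over dyadic shells to `O(∑ⱼ ω(2⁻ʲ δ))` with `δ ≤ |2^k ξ|⁻¹`. Since `ω` is
increasing and `ω(2t) ≤ 2ω(t)`, each `ω(b)` is at most `4 √ω(δ)` times the integral of `√ω(t)/t`
over `(b/2, b]`, and these intervals are disjoint subsets of `(0, 1)`.
-/

open MeasureTheory Real
open scoped ENNReal RealInnerProductSpace

noncomputable section

/-- The Dini norm `‖g‖_Dini = ∫₀¹ g(t) dt/t`. -/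
def diniNorm (g : ℝ → ℝ) : ℝ := ∫ t in Set.Ioo (0 : ℝ) 1, g t / t

open Set Metric Module
open scoped Function

theorem monotoneOn_of_subadditive {ω : ℝ → ℝ} (h0 : ω 0 = 0)
    (hsub : ∀ u t s, 0 ≤ u → 0 ≤ t → 0 ≤ s → u ≤ t + s → ω u ≤ ω t + ω s) :
    MonotoneOn ω (Ici 0) := fun u hu t ht hut => by
  simpa [h0] using hsub u t 0 hu ht le_rfl (by simpa using hut)

theorem diniNorm_nonneg {g : ℝ → ℝ} (hg : ∀ t ∈ Ioo (0 : ℝ) 1, 0 ≤ g t) : 0 ≤ diniNorm g :=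
  setIntegral_nonneg measurableSet_Ioo fun t ht => div_nonneg (hg t ht) ht.1.le

section Dini

variable {ω : ℝ → ℝ}

theorem ofReal_le_mul_setLIntegral_sqrt_div (hω : ∀ t, 0 ≤ t → 0 ≤ ω t)
    (hmono : MonotoneOn ω (Ici 0)) (hdouble : ∀ t, 0 ≤ t → ω (2 * t) ≤ 2 * ω t)
    {b ρ : ℝ} (hb : 0 < b) (hbρ : b ≤ ρ) :
    ENNReal.ofReal (ω b) ≤
      ENNReal.ofReal (4 * √(ω ρ)) * ∫⁻ t in Ioc (b / 2) b, ENNReal.ofReal (√(ω t) / t) := by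
  have hpt : ∀ t ∈ Ioc (b / 2) b, 2 * ω b / b ≤ 4 * √(ω ρ) * (√(ω t) / t) := by
    rintro t ⟨hbt, htb⟩
    have ht : 0 < t := by linarith
    have hωb : ω b ≤ 2 * ω t :=
      (hmono hb.le (by simp only [mem_Ici]; linarith) (by linarith)).trans (hdouble t ht.le)
    have hωt : √(ω t) ≤ √(ω ρ) :=
      sqrt_le_sqrt (hmono ht.le (by simp only [mem_Ici]; linarith) (htb.trans hbρ))
    calc 2 * ω b / b ≤ 4 * ω t / t := by
          rw [div_le_div_iff₀ hb ht]
          nlinarith [hω b hb.le]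
      _ = 4 * √(ω t) * (√(ω t) / t) := by
          rw [mul_div_assoc', mul_assoc, mul_self_sqrt (hω t ht.le)]
      _ ≤ 4 * √(ω ρ) * (√(ω t) / t) := by gcongr
  calc ENNReal.ofReal (ω b) = ∫⁻ _ in Ioc (b / 2) b, ENNReal.ofReal (2 * ω b / b) := by
        rw [setLIntegral_const, volume_Ioc,
          ← ENNReal.ofReal_mul (div_nonneg (mul_nonneg zero_le_two (hω b hb.le)) hb.le)]
        congr 1
        field_simp
        ring
    _ ≤ ∫⁻ t in Ioc (b / 2) b, ENNReal.ofReal (4 * √(ω ρ)) * ENNReal.ofReal (√(ω t) / t) :=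
        setLIntegral_mono' measurableSet_Ioc fun t ht => by
          rw [← ENNReal.ofReal_mul (by positivity)]
          exact ENNReal.ofReal_le_ofReal (hpt t ht)
    _ = _ := lintegral_const_mul' _ _ ENNReal.ofReal_ne_top

theorem tsum_ofReal_dyadic_le_diniNorm (hω : ∀ t, 0 ≤ t → 0 ≤ ω t)
    (hmono : MonotoneOn ω (Ici 0)) (hdouble : ∀ t, 0 ≤ t → ω (2 * t) ≤ 2 * ω t)
    (hdini : IntegrableOn (fun t => √(ω t) / t) (Ioo 0 1)) {δ ρ : ℝ} (hδ : 0 < δ) (hδρ : δ ≤ ρ)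
    (hρ : ρ < 1) :
    ∑' j : ℕ, ENNReal.ofReal (ω (δ / 2 ^ j)) ≤
      ENNReal.ofReal (4 * √(ω ρ) * diniNorm fun t => √(ω t)) := by
  set a : ℕ → ℝ := fun j => δ / 2 ^ j
  have ha : Antitone a := fun i j hij =>
    div_le_div_of_nonneg_left hδ.le (by positivity) (pow_le_pow_right₀ one_le_two hij)
  have ha_le : ∀ j, a j ≤ δ := fun j => by simpa [a] using ha (Nat.zero_le j)
  have hunion : (⋃ j, Ioc (a (j + 1)) (a j)) ⊆ Ioo 0 1 := iUnion_subset fun j t ht =>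
    ⟨(by positivity : 0 < a (j + 1)).trans ht.1, by linarith [ht.2, ha_le j]⟩
  have hdisj : Pairwise (Disjoint on fun j => Ioc (a (j + 1)) (a j)) := by
    simpa only [Order.succ_eq_add_one] using ha.pairwise_disjoint_on_Ioc_succ
  calc ∑' j, ENNReal.ofReal (ω (a j))
      ≤ ∑' j, ENNReal.ofReal (4 * √(ω ρ)) *
          ∫⁻ t in Ioc (a (j + 1)) (a j), ENNReal.ofReal (√(ω t) / t) :=
        ENNReal.tsum_le_tsum fun j => by
          rw [show a (j + 1) = a j / 2 by simp [a, pow_succ, div_div]]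
          exact ofReal_le_mul_setLIntegral_sqrt_div hω hmono hdouble (by positivity)
            ((ha_le j).trans hδρ)
    _ = ENNReal.ofReal (4 * √(ω ρ)) *
          ∫⁻ t in ⋃ j, Ioc (a (j + 1)) (a j), ENNReal.ofReal (√(ω t) / t) := by
        rw [ENNReal.tsum_mul_left,
          lintegral_iUnion (fun _ => measurableSet_Ioc) hdisj]
    _ ≤ ENNReal.ofReal (4 * √(ω ρ)) * ∫⁻ t in Ioo 0 1, ENNReal.ofReal (√(ω t) / t) := by
        gcongr
    _ = _ := by
        rw [diniNorm, ENNReal.ofReal_mul (q := ∫ t in Ioo 0 1, √(ω t) / t) (by positivity),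
          ofReal_integral_eq_lintegral_ofReal hdini]
        filter_upwards [self_mem_ae_restrict measurableSet_Ioo] with t ht
        exact div_nonneg (sqrt_nonneg _) ht.1.le

end Dini

theorem one_add_pow_sub_one_sub_pow_le {t : ℝ} (ht₀ : 0 ≤ t) (ht₁ : t ≤ 1) (d : ℕ) :
    (1 + t) ^ d - (1 - t) ^ d ≤ 2 * d * 2 ^ d * t := by
  have hmax : max |1 + t| |1 - t| ≤ 2 :=
    max_le (by rw [abs_le]; constructor <;> linarith) (by rw [abs_le]; constructor <;> linarith)
  calc (1 + t) ^ d - (1 - t) ^ d ≤ |(1 + t) ^ d - (1 - t) ^ d| := le_abs_self _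
    _ ≤ |(1 + t) - (1 - t)| * d * max |1 + t| |1 - t| ^ (d - 1) := abs_pow_sub_pow_le _ _ _
    _ ≤ (2 * t) * d * 2 ^ d := by
        rw [show (1 + t) - (1 - t) = 2 * t by ring, abs_of_nonneg (by positivity)]
        gcongr
        exact (pow_le_pow_left₀ (by positivity) hmax _).trans
          (pow_le_pow_right₀ one_le_two (Nat.sub_le d 1))
    _ = 2 * d * 2 ^ d * t := by ring

theorem setLIntegral_norm_gt_le_tsum {E : Type*} [NormedAddCommGroup E] [MeasurableSpace E]
    (μ : Measure E) {f : ℝ → ℝ≥0∞} (hf : AntitoneOn f (Ioi 0)) {R : ℝ}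
    (hR : 0 < R) :
    ∫⁻ x in {x : E | R < ‖x‖}, f ‖x‖ ∂μ ≤
      ∑' j : ℕ, f (R * 2 ^ j) * μ (closedBall 0 (R * 2 ^ (j + 1))) := by
  set shell : ℕ → Set E := fun j => {x | R * 2 ^ j ≤ ‖x‖ ∧ ‖x‖ < R * 2 ^ (j + 1)}
  have hcover : {x : E | R < ‖x‖} ⊆ ⋃ j, shell j := fun x hx => by
    obtain ⟨j, hj⟩ := exists_nat_pow_near ((one_le_div hR).2 (le_of_lt hx)) one_lt_two
    exact mem_iUnion.2 ⟨j, (le_div_iff₀' hR).1 hj.1, (div_lt_iff₀' hR).1 hj.2⟩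
  have hshell : ∀ j, ∫⁻ x in shell j, f ‖x‖ ∂μ ≤
      f (R * 2 ^ j) * μ (closedBall 0 (R * 2 ^ (j + 1))) := fun j =>
    calc ∫⁻ x in shell j, f ‖x‖ ∂μ ≤ ∫⁻ _ in shell j, f (R * 2 ^ j) ∂μ :=
          setLIntegral_mono measurable_const fun x hx =>
            hf (by simp only [mem_Ioi]; positivity)
              ((by positivity : (0 : ℝ) < _).trans_le hx.1) hx.1
      _ ≤ f (R * 2 ^ j) * μ (closedBall 0 (R * 2 ^ (j + 1))) := by
          rw [setLIntegral_const]
          gcongr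
          exact fun x hx => mem_closedBall_zero_iff.2 hx.2.le
  calc ∫⁻ x in {x : E | R < ‖x‖}, f ‖x‖ ∂μ ≤ ∫⁻ x in ⋃ j, shell j, f ‖x‖ ∂μ :=
        lintegral_mono_set hcover
    _ ≤ ∑' j, ∫⁻ x in shell j, f ‖x‖ ∂μ := lintegral_iUnion_le _ _
    _ ≤ _ := ENNReal.tsum_le_tsum hshell

theorem ofReal_norm_indicator_sub_shift_le {E F : Type*} [NormedAddCommGroup E]
    [NormedAddCommGroup F] {K : E → F} {ω : ℝ → ℝ} {C P : ℝ} {d : ℕ} {z : E} (hC : 0 ≤ C)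
    (hsize : ∀ x, x ≠ 0 → ‖K x‖ ≤ C / ‖x‖ ^ d)
    (hsmooth : ∀ x y, x ≠ 0 → 2 * ‖y‖ ≤ ‖x‖ → ‖K (x - y) - K x‖ ≤ ω (‖y‖ / ‖x‖) / ‖x‖ ^ d)
    (hP : 0 < P) (hzP : ‖z‖ ≤ P) (x : E) :
    ENNReal.ofReal ‖{y | P < ‖y‖}.indicator K x - {y | P < ‖y‖}.indicator K (x + z)‖ ≤
      (closedBall 0 (P + ‖z‖) \ closedBall 0 (P - ‖z‖)).indicator
          (fun _ => ENNReal.ofReal (2 * C / P ^ d)) x +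
        {y | P + ‖z‖ < ‖y‖}.indicator
          (fun y => ENNReal.ofReal (ω (‖z‖ / ‖y‖) / ‖y‖ ^ d)) x := by
  set S : Set E := {y | P < ‖y‖}
  have hxz : ‖x‖ - ‖z‖ ≤ ‖x + z‖ := by simpa using norm_sub_norm_le x (-z)
  by_cases htail : P + ‖z‖ < ‖x‖
  · have hx : x ≠ 0 := norm_pos_iff.1 (by linarith [norm_nonneg z])
    rw [indicator_of_mem (show x ∈ {y : E | P + ‖z‖ < ‖y‖} from htail),
      indicator_of_mem (show x ∈ S by simp [S]; linarith [norm_nonneg z]),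
      indicator_of_mem (show x + z ∈ S by simp [S]; linarith), norm_sub_rev]
    refine le_add_left (ENNReal.ofReal_le_ofReal ?_)
    simpa using hsmooth x (-z) hx (by rw [norm_neg]; linarith)
  by_cases hannulus : x ∈ closedBall 0 (P + ‖z‖) \ closedBall 0 (P - ‖z‖)
  · have hbound : ∀ y, ‖S.indicator K y‖ ≤ C / P ^ d := fun y => by
      by_cases hy : y ∈ S
      · rw [indicator_of_mem hy]
        have hy : P < ‖y‖ := hy
        exact (hsize y (norm_pos_iff.1 (hP.trans hy))).trans (by gcongr)
      · rw [indicator_of_notMem hy, norm_zero]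
        positivity
    rw [indicator_of_mem hannulus]
    refine le_add_right (ENNReal.ofReal_le_ofReal ?_)
    calc ‖S.indicator K x - S.indicator K (x + z)‖
        ≤ ‖S.indicator K x‖ + ‖S.indicator K (x + z)‖ := norm_sub_le _ _
      _ ≤ 2 * C / P ^ d := by rw [mul_div_assoc]; linarith [hbound x, hbound (x + z)]
  · have hx : ‖x‖ ≤ P - ‖z‖ := by
      simp only [mem_sdiff, mem_closedBall_zero_iff, not_and, not_not] at hannulus
      exact hannulus (not_lt.1 htail)
    rw [indicator_of_notMem (show x ∉ S by simp [S]; linarith),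
      indicator_of_notMem (show x + z ∉ S by simp [S]; linarith [norm_add_le x z])]
    simp

section AddHaar

variable {E : Type*} [NormedAddCommGroup E] [NormedSpace ℝ E] [FiniteDimensional ℝ E]
  [MeasurableSpace E] [BorelSpace E] (μ : Measure E) [μ.IsAddHaarMeasure] {ω : ℝ → ℝ}

theorem addHaar_closedBall_diff_closedBall {ℓ R : ℝ} (hℓ : 0 ≤ ℓ) (hℓR : ℓ ≤ R) :
    μ (closedBall 0 R \ closedBall 0 ℓ) =
      ENNReal.ofReal (R ^ finrank ℝ E - ℓ ^ finrank ℝ E) * μ (ball 0 1) := by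
  rw [measure_sdiff (closedBall_subset_closedBall hℓR) measurableSet_closedBall.nullMeasurableSet
      measure_closedBall_lt_top.ne, Measure.addHaar_closedBall μ _ (hℓ.trans hℓR),
    Measure.addHaar_closedBall μ _ hℓ, ← ENNReal.sub_mul fun _ _ => measure_ball_lt_top.ne,
    ENNReal.ofReal_sub _ (by positivity)]

theorem addHaar_annulus_le {P h : ℝ} (hP : 0 < P) (hh : 0 ≤ h) (hhP : h ≤ P) :
    μ (closedBall 0 (P + h) \ closedBall 0 (P - h)) ≤
      ENNReal.ofReal (2 * finrank ℝ E * 2 ^ finrank ℝ E * (h / P) * P ^ finrank ℝ E) *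
        μ (ball 0 1) := by
  rw [addHaar_closedBall_diff_closedBall μ (by linarith) (by linarith)]
  gcongr
  calc (P + h) ^ finrank ℝ E - (P - h) ^ finrank ℝ E
      = P ^ finrank ℝ E * ((1 + h / P) ^ finrank ℝ E - (1 - h / P) ^ finrank ℝ E) := by
        rw [mul_sub, ← mul_pow, ← mul_pow, mul_add, mul_sub, mul_one, mul_div_cancel₀ _ hP.ne']
    _ ≤ P ^ finrank ℝ E * (2 * finrank ℝ E * 2 ^ finrank ℝ E * (h / P)) := by
        gcongr
        exact one_add_pow_sub_one_sub_pow_le (by positivity) ((div_le_one hP).2 hhP) _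
    _ = _ := by ring

theorem setLIntegral_norm_gt_modulus_div_pow_le (hω : ∀ t, 0 ≤ t → 0 ≤ ω t)
    (hmono : MonotoneOn ω (Ici 0)) (hdouble : ∀ t, 0 ≤ t → ω (2 * t) ≤ 2 * ω t)
    (hdini : IntegrableOn (fun t => √(ω t) / t) (Ioo 0 1)) {h R ρ : ℝ} (hh : 0 < h) (hR : 0 < R)
    (hhR : h / R ≤ ρ) (hρ : ρ < 1) :
    ∫⁻ x in {x : E | R < ‖x‖}, ENNReal.ofReal (ω (h / ‖x‖) / ‖x‖ ^ finrank ℝ E) ∂μ ≤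
      ENNReal.ofReal (2 ^ finrank ℝ E * (4 * √(ω ρ) * diniNorm fun t => √(ω t))) *
        μ (ball 0 1) := by
  set d := finrank ℝ E
  have hanti : AntitoneOn (fun s : ℝ => ENNReal.ofReal (ω (h / s) / s ^ d)) (Ioi 0) :=
    fun s hs u hu hsu => by
      rw [mem_Ioi] at hs hu
      exact ENNReal.ofReal_le_ofReal <| div_le_div₀ (hω _ (by positivity))
        (hmono (by simp only [mem_Ici]; positivity) (by simp only [mem_Ici]; positivity)
          (div_le_div_of_nonneg_left hh.le hs hsu))
        (by positivity) (pow_le_pow_left₀ hs.le hsu d)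
  have hterm : ∀ j : ℕ, ENNReal.ofReal (ω (h / (R * 2 ^ j)) / (R * 2 ^ j) ^ d) *
      μ (closedBall 0 (R * 2 ^ (j + 1))) =
        ENNReal.ofReal (2 ^ d) * ENNReal.ofReal (ω (h / R / 2 ^ j)) * μ (ball 0 1) := fun j => by
    rw [Measure.addHaar_closedBall μ _ (by positivity), ← mul_assoc,
      ← ENNReal.ofReal_mul (div_nonneg (hω _ (by positivity)) (by positivity)),
      ← ENNReal.ofReal_mul (by positivity), div_div, mul_comm (2 ^ d : ℝ)]
    congr 2
    field_simp
    ring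
  calc ∫⁻ x in {x : E | R < ‖x‖}, ENNReal.ofReal (ω (h / ‖x‖) / ‖x‖ ^ d) ∂μ
      ≤ ∑' j : ℕ, ENNReal.ofReal (2 ^ d) * ENNReal.ofReal (ω (h / R / 2 ^ j)) * μ (ball 0 1) := by
        simpa only [hterm] using setLIntegral_norm_gt_le_tsum μ hanti hR
    _ = ENNReal.ofReal (2 ^ d) * (∑' j : ℕ, ENNReal.ofReal (ω (h / R / 2 ^ j))) *
          μ (ball 0 1) := by
        rw [ENNReal.tsum_mul_right, ENNReal.tsum_mul_left]
    _ ≤ ENNReal.ofReal (2 ^ d) * ENNReal.ofReal (4 * √(ω ρ) * diniNorm fun t => √(ω t)) *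
          μ (ball 0 1) := by
        gcongr
        exact tsum_ofReal_dyadic_le_diniNorm hω hmono hdouble hdini (by positivity) hhR hρ
    _ = _ := by rw [← ENNReal.ofReal_mul (by positivity)]

theorem lintegral_ofReal_norm_indicator_sub_shift_le {F : Type*} [NormedAddCommGroup F]
    {K : E → F} {C P ρ : ℝ} {z : E} (hC : 0 ≤ C) (hω : ∀ t, 0 ≤ t → 0 ≤ ω t)
    (hmono : MonotoneOn ω (Ici 0)) (hdouble : ∀ t, 0 ≤ t → ω (2 * t) ≤ 2 * ω t)
    (hdini : IntegrableOn (fun t => √(ω t) / t) (Ioo 0 1))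
    (hsize : ∀ x, x ≠ 0 → ‖K x‖ ≤ C / ‖x‖ ^ finrank ℝ E)
    (hsmooth : ∀ x y, x ≠ 0 → 2 * ‖y‖ ≤ ‖x‖ →
      ‖K (x - y) - K x‖ ≤ ω (‖y‖ / ‖x‖) / ‖x‖ ^ finrank ℝ E)
    (hP : 0 < P) (hz : z ≠ 0) (hzP : ‖z‖ / P ≤ ρ) (hρ : ρ < 1) :
    ∫⁻ x, ENNReal.ofReal ‖{y | P < ‖y‖}.indicator K x - {y | P < ‖y‖}.indicator K (x + z)‖ ∂μ ≤
      ENNReal.ofReal (2 ^ (finrank ℝ E + 2) * (finrank ℝ E + 1) *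
        (C * ρ + diniNorm (fun t => √(ω t)) * √(ω ρ))) * μ (ball 0 1) := by
  set d := finrank ℝ E
  set D := diniNorm fun t => √(ω t)
  have hD : 0 ≤ D := diniNorm_nonneg fun t _ => sqrt_nonneg _
  have hz₀ : 0 < ‖z‖ := norm_pos_iff.2 hz
  have hzP' : ‖z‖ ≤ P := by
    have := (div_le_iff₀ hP).1 (hzP.trans hρ.le)
    linarith
  set A : Set E := closedBall 0 (P + ‖z‖) \ closedBall 0 (P - ‖z‖)
  set T : Set E := {y | P + ‖z‖ < ‖y‖}
  have hT : MeasurableSet T := measurableSet_lt measurable_const measurable_norm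
  calc ∫⁻ x, ENNReal.ofReal ‖{y | P < ‖y‖}.indicator K x - {y | P < ‖y‖}.indicator K (x + z)‖ ∂μ
      ≤ ∫⁻ x, (A.indicator (fun _ => ENNReal.ofReal (2 * C / P ^ d)) x +
          T.indicator (fun y => ENNReal.ofReal (ω (‖z‖ / ‖y‖) / ‖y‖ ^ d)) x) ∂μ :=
        lintegral_mono (ofReal_norm_indicator_sub_shift_le hC hsize hsmooth hP hzP')
    _ = ENNReal.ofReal (2 * C / P ^ d) * μ A +
          ∫⁻ y in T, ENNReal.ofReal (ω (‖z‖ / ‖y‖) / ‖y‖ ^ d) ∂μ := by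
        rw [lintegral_add_left (measurable_const.indicator
            (measurableSet_closedBall.diff measurableSet_closedBall)),
          lintegral_indicator_const (measurableSet_closedBall.diff measurableSet_closedBall),
          lintegral_indicator hT]
    _ ≤ ENNReal.ofReal (2 * C / P ^ d) *
            (ENNReal.ofReal (2 * d * 2 ^ d * (‖z‖ / P) * P ^ d) * μ (ball 0 1)) +
          ENNReal.ofReal (2 ^ d * (4 * √(ω ρ) * D)) * μ (ball 0 1) := by
        gcongr
        · exact addHaar_annulus_le μ hP hz₀.le hzP'
        · exact setLIntegral_norm_gt_modulus_div_pow_le μ hω hmono hdouble hdini hz₀ (by linarith)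
            (hzP.trans' (div_le_div_of_nonneg_left hz₀.le hP (by linarith))) hρ
    _ ≤ _ := by
        rw [← mul_assoc, ← ENNReal.ofReal_mul (by positivity), ← add_mul,
          ← ENNReal.ofReal_add (by positivity) (by positivity)]
        gcongr
        calc 2 * C / P ^ d * (2 * d * 2 ^ d * (‖z‖ / P) * P ^ d) + 2 ^ d * (4 * √(ω ρ) * D)
            = 2 ^ (d + 2) * (d * C * (‖z‖ / P) + √(ω ρ) * D) := by
              field_simp
              ring
          _ ≤ 2 ^ (d + 2) * (d + 1) * (C * ρ + D * √(ω ρ)) := by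
              rw [mul_assoc (2 ^ (d + 2) : ℝ)]
              gcongr 2 ^ (d + 2) * ?_
              have : d * C * (‖z‖ / P) ≤ d * C * ρ := by gcongr
              have : 0 ≤ C * ρ := mul_nonneg hC ((by positivity : 0 ≤ ‖z‖ / P).trans hzP)
              have : 0 ≤ d * (D * √(ω ρ)) := by positivity
              linarith

end AddHaar

open scoped FourierTransform in
theorem norm_setIntegral_mul_fourier_exp_le {V : Type*} [NormedAddCommGroup V]
    [InnerProductSpace ℝ V] [FiniteDimensional ℝ V] [MeasurableSpace V] [BorelSpace V]
    {S : Set V} (hS : MeasurableSet S) (K : V → ℂ) {ξ : V} (hξ : ξ ≠ 0) :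
    ‖∫ x in S, K x * Complex.exp (-(2 * π * Complex.I) * (⟪x, ξ⟫ : ℝ))‖ ≤
      (∫⁻ x, ENNReal.ofReal ‖S.indicator K x - S.indicator K (x + (1 / (2 * ‖ξ‖ ^ 2)) • ξ)‖).toReal
        / 2 := by
  have hchar : ∀ x,
      S.indicator (fun x => K x * Complex.exp (-(2 * π * Complex.I) * (⟪x, ξ⟫ : ℝ))) x =
        𝐞 (-⟪x, ξ⟫) • S.indicator K x := fun x => by
    by_cases hx : x ∈ S
    · rw [indicator_of_mem hx, indicator_of_mem hx, Circle.smul_def, Real.fourierChar_apply,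
        smul_eq_mul, mul_comm]
      push_cast
      ring_nf
    · simp [hx]
  rw [← integral_indicator hS, funext hchar]
  by_cases hK : Integrable (S.indicator K)
  · rw [fourierIntegral_eq_half_sub_half_period_translate hξ hK, norm_smul, one_div, norm_inv,
      Complex.norm_two, inv_mul_eq_div]
    gcongr
    simpa only [Circle.norm_smul] using norm_integral_le_lintegral_norm (μ := volume)
      fun v => 𝐞 (-⟪v, ξ⟫) • (S.indicator K v - S.indicator K (v + (1 / (2 * ‖ξ‖ ^ 2)) • ξ))
  · rw [integral_undef (mt (Real.fourierIntegral_convergent_iff ξ).1 hK), norm_zero]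
    positivity

theorem truncated_fourier_decay_general (n : ℕ) :
    ∃ c : ℝ, 0 < c ∧
      ∀ (K : EuclideanSpace ℝ (Fin n) → ℂ) (C_K : ℝ) (ω : ℝ → ℝ), 0 < C_K →
        (∀ t, 0 ≤ t → 0 ≤ ω t) → ω 0 = 0 →
        (∀ u t s, 0 ≤ u → 0 ≤ t → 0 ≤ s → u ≤ t + s → ω u ≤ ω t + ω s) →
        IntegrableOn (fun t => ω t / t) (Set.Ioo (0 : ℝ) 1) →
        IntegrableOn (fun t => Real.sqrt (ω t) / t) (Set.Ioo (0 : ℝ) 1) →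
        (∀ x : EuclideanSpace ℝ (Fin n), x ≠ 0 → ‖K x‖ ≤ C_K / ‖x‖ ^ n) →
        (∀ x y : EuclideanSpace ℝ (Fin n), x ≠ 0 → 2 * ‖y‖ ≤ ‖x‖ →
          ‖K (x - y) - K x‖ ≤ ω (‖y‖ / ‖x‖) / ‖x‖ ^ n) →
        (∀ ε R : ℝ, 0 < ε → ε < R →
          ∫ x in {x : EuclideanSpace ℝ (Fin n) | ε < ‖x‖ ∧ ‖x‖ < R}, K x = 0) →
        ∀ (k : ℤ) (ξ : EuclideanSpace ℝ (Fin n)), 1 < (2 : ℝ) ^ k * ‖ξ‖ →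
          ‖∫ x in {x : EuclideanSpace ℝ (Fin n) | (2 : ℝ) ^ k < ‖x‖},
              K x * Complex.exp (-(2 * π * Complex.I) * (⟪x, ξ⟫ : ℝ))‖ ≤
            c * (C_K * ((2 : ℝ) ^ k * ‖ξ‖)⁻¹ +
              diniNorm (fun t => Real.sqrt (ω t)) *
                Real.sqrt (ω (((2 : ℝ) ^ k * ‖ξ‖)⁻¹))) := by
  set V := volume.real (ball (0 : EuclideanSpace ℝ (Fin n)) 1)
  have hV : 0 < V := ENNReal.toReal_pos (measure_ball_pos _ _ one_pos).ne' measure_ball_lt_top.ne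
  refine ⟨2 ^ (n + 1) * (n + 1) * V, by positivity, ?_⟩
  intro K C_K ω hC hω h0 hsub _ hdini hsize hsmooth _ k ξ hr
  set P : ℝ := 2 ^ k
  set ρ : ℝ := (P * ‖ξ‖)⁻¹
  set D := diniNorm fun t => √(ω t)
  have hP : 0 < P := by positivity
  have hξ : ξ ≠ 0 := by
    rintro rfl
    simp at hr
    linarith
  have hD : 0 ≤ D := diniNorm_nonneg fun t _ => sqrt_nonneg _
  have hzP : ‖(1 / (2 * ‖ξ‖ ^ 2)) • ξ‖ / P ≤ ρ := by
    have hξ' : 0 < ‖ξ‖ := norm_pos_iff.2 hξ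
    calc ‖(1 / (2 * ‖ξ‖ ^ 2)) • ξ‖ / P = ρ / 2 := by
          rw [norm_smul, Real.norm_of_nonneg (by positivity)]
          simp only [ρ]
          field_simp
      _ ≤ ρ := by linarith [show 0 < ρ by positivity]
  have hbound := lintegral_ofReal_norm_indicator_sub_shift_le volume (K := K) hC.le hω
    (monotoneOn_of_subadditive h0 hsub)
    (fun t ht => (hsub (2 * t) t t (by positivity) ht ht (two_mul t).le).trans_eq (two_mul _).symm)
    hdini (by simpa only [finrank_euclideanSpace_fin] using hsize)
    (by simpa only [finrank_euclideanSpace_fin] using hsmooth) hP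
    (by simpa [norm_smul] using hξ) hzP (inv_lt_one_of_one_lt₀ hr)
  rw [finrank_euclideanSpace_fin] at hbound
  calc _ ≤ _ := norm_setIntegral_mul_fourier_exp_le
        (measurableSet_lt measurable_const measurable_norm) K hξ
    _ ≤ 2 ^ (n + 2) * (n + 1) * (C_K * ρ + D * √(ω ρ)) * V / 2 := by
        gcongr
        refine ENNReal.toReal_le_of_le_ofReal (by positivity) (hbound.trans_eq ?_)
        rw [ENNReal.ofReal_mul (q := V) (by positivity), ofReal_measureReal]
    _ = 2 ^ (n + 1) * (n + 1) * V * (C_K * ρ + D * √(ω ρ)) := by ring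

/-- for an `ω`-Dini Calderón–Zygmund convolution kernel with annulus
cancellation, the Fourier transform of `K^k = K χ_{{|x| > 2^k}}` satisfies, for `|2^k ξ| > 1`,
`|K^k^(ξ)| ≤ c_n (C_K |2^k ξ|⁻¹ + ‖ω^{1/2}‖_Dini ω(|2^k ξ|⁻¹)^{1/2})`. -/
theorem truncated_fourier_decay (n : ℕ) (hn : 1 ≤ n) :
    ∃ c : ℝ, 0 < c ∧
      ∀ (K : EuclideanSpace ℝ (Fin n) → ℂ) (C_K : ℝ) (ω : ℝ → ℝ), 0 < C_K →
        (∀ t, 0 ≤ t → 0 ≤ ω t) → ω 0 = 0 →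
        (∀ u t s, 0 ≤ u → 0 ≤ t → 0 ≤ s → u ≤ t + s → ω u ≤ ω t + ω s) →
        IntegrableOn (fun t => ω t / t) (Set.Ioo (0 : ℝ) 1) →
        IntegrableOn (fun t => Real.sqrt (ω t) / t) (Set.Ioo (0 : ℝ) 1) →
        (∀ x : EuclideanSpace ℝ (Fin n), x ≠ 0 → ‖K x‖ ≤ C_K / ‖x‖ ^ n) →
        (∀ x y : EuclideanSpace ℝ (Fin n), x ≠ 0 → 2 * ‖y‖ ≤ ‖x‖ →
          ‖K (x - y) - K x‖ ≤ ω (‖y‖ / ‖x‖) / ‖x‖ ^ n) →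
        (∀ ε R : ℝ, 0 < ε → ε < R →
          ∫ x in {x : EuclideanSpace ℝ (Fin n) | ε < ‖x‖ ∧ ‖x‖ < R}, K x = 0) →
        ∀ (k : ℤ) (ξ : EuclideanSpace ℝ (Fin n)), 1 < (2 : ℝ) ^ k * ‖ξ‖ →
          ‖∫ x in {x : EuclideanSpace ℝ (Fin n) | (2 : ℝ) ^ k < ‖x‖},
              K x * Complex.exp (-(2 * π * Complex.I) * (⟪x, ξ⟫ : ℝ))‖ ≤
            c * (C_K * ((2 : ℝ) ^ k * ‖ξ‖)⁻¹ +
              diniNorm (fun t => Real.sqrt (ω t)) *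
                Real.sqrt (ω (((2 : ℝ) ^ k * ‖ξ‖)⁻¹))) :=
  truncated_fourier_decay_general n

end
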